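/- Let d > 0 and m : Fin n → ℤ with all mᵢ ≥ 0 satisfy d² - ∑ mᵢ² = -1 and (d-1)(d-2)/2 - ∑ mᵢ(mᵢ-1)/2 = 0. Then there exist three distinct indices i₁, i₂, i₃ with m_{i₁} + m_{i₂} + m_{i₃} > d. -/

import Mathlib

/-!
Writing the class as `C = dH - ∑ mᵢEᵢ`, the adjunction formula `2p_a - 2 = C² + K·C` with
`p_a = 0` and `C² = -1` gives `K·C = -1`, i.e. `∑ mᵢ = 3d - 1`. Let `a ≥ b ≥ c` be the three
largest multiplicities and suppose `a + b + c ≤ d`. Every other `mᵢ` is at most `c`, so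
`d² + 1 = ∑ mᵢ² ≤ a² + b² + c (3d - 1 - a - b)`, and the right-hand side is at most `d²`.
-/

open Finset

theorem two_mul_arithGenus_sub_two {ι : Type*} [Fintype ι] (d : ℤ) (m : ι → ℤ) :
    2 * ((d - 1) * (d - 2) / 2 - ∑ i, m i * (m i - 1) / 2) - 2
      = (d ^ 2 - ∑ i, m i ^ 2) + (∑ i, m i - 3 * d) := by
  have hd : 2 * ((d - 1) * (d - 2) / 2) = (d - 1) * (d - 2) :=
    Int.two_mul_ediv_two_of_even (by convert Int.even_mul_pred_self (d - 1) using 2; ring)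
  have hm : 2 * ∑ i, m i * (m i - 1) / 2 = ∑ i, m i * (m i - 1) := by
    rw [mul_sum]
    exact sum_congr rfl fun i _ ↦ Int.two_mul_ediv_two_of_even (Int.even_mul_pred_self _)
  rw [mul_sub, hd, hm]
  simp only [mul_sub, mul_one, sum_sub_distrib, sq]
  ring

theorem exists_three_largest {ι α : Type*} [Fintype ι] [LinearOrder α] (f : ι → α)
    (hι : 3 ≤ Fintype.card ι) :
    ∃ i₁ i₂ i₃, i₁ ≠ i₂ ∧ i₁ ≠ i₃ ∧ i₂ ≠ i₃ ∧ f i₂ ≤ f i₁ ∧ f i₃ ≤ f i₂ ∧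
      ∀ k, k ≠ i₁ → k ≠ i₂ → f k ≤ f i₃ := by
  classical
  have : Nonempty ι := Fintype.card_pos_iff.1 (by omega)
  obtain ⟨i₁, -, h₁⟩ := exists_max_image univ f univ_nonempty
  have hne₁ : (univ.erase i₁).Nonempty := by
    rw [← card_pos, card_erase_of_mem (mem_univ _), card_univ]
    omega
  obtain ⟨i₂, hi₂, h₂⟩ := exists_max_image (univ.erase i₁) f hne₁
  have hne₂ : ((univ.erase i₁).erase i₂).Nonempty := by
    rw [← card_pos, card_erase_of_mem hi₂, card_erase_of_mem (mem_univ _), card_univ]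
    omega
  obtain ⟨i₃, hi₃, h₃⟩ := exists_max_image ((univ.erase i₁).erase i₂) f hne₂
  simp only [mem_erase, mem_univ, and_true] at hi₂ hi₃ h₂ h₃
  exact ⟨i₁, i₂, i₃, Ne.symm hi₂, Ne.symm hi₃.2, Ne.symm hi₃.1, h₁ i₂ (mem_univ _),
    h₂ i₃ hi₃.2, fun k hk₁ hk₂ ↦ h₃ k ⟨hk₂, hk₁⟩⟩

theorem sum_sq_le_of_le_off_pair {ι R : Type*} [Fintype ι] [CommRing R] [LinearOrder R]
    [IsStrictOrderedRing R] {f : ι → R} {i j : ι} (hij : i ≠ j) {c : R} (hf : ∀ k, 0 ≤ f k)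
    (hc : ∀ k, k ≠ i → k ≠ j → f k ≤ c) :
    ∑ k, f k ^ 2 ≤ f i ^ 2 + f j ^ 2 + c * (∑ k, f k - f i - f j) := by
  classical
  set s := (univ.erase i).erase j
  have hj : j ∈ univ.erase i := mem_erase.2 ⟨hij.symm, mem_univ j⟩
  have split (g : ι → R) : ∑ k, g k = g i + g j + ∑ k ∈ s, g k := by
    rw [← add_sum_erase _ g (mem_univ i), ← add_sum_erase _ g hj, add_assoc]
  have hs : ∑ k ∈ s, f k ^ 2 ≤ c * ∑ k ∈ s, f k := by
    rw [mul_sum]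
    refine sum_le_sum fun k hk ↦ ?_
    have hki : k ≠ i := ne_of_mem_erase (mem_of_mem_erase hk)
    rw [sq]
    exact mul_le_mul_of_nonneg_right (hc k hki (ne_of_mem_erase hk)) (hf k)
  rw [split (f · ^ 2), split f]
  linarith

theorem sq_add_sq_add_mul_lt {R : Type*} [CommRing R] [LinearOrder R] [IsStrictOrderedRing R]
    {a b c d : R} (hc : 0 ≤ c) (hcb : c ≤ b) (hba : b ≤ a) (habc : a + b + c ≤ d) :
    a ^ 2 + b ^ 2 + c * (3 * d - 1 - a - b) < d ^ 2 + 1 := by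
  -- `d² - a² - b² - c (3d - a - b) = (d - a - b - c)(d + a + b - 2c) + 2(ab - c²)`
  nlinarith [mul_nonneg (sub_nonneg.2 habc) (by linarith : (0 : R) ≤ 2 * a + 2 * b - c),
    sq_nonneg (d - a - b - c), mul_le_mul hcb (hcb.trans hba) hc (hc.trans hcb)]

theorem noether_lemma_neg_one_general (n : ℕ) (hn : 3 ≤ n) (d : ℤ) (m : Fin n → ℤ)
    (hm : ∀ i, 0 ≤ m i)
    (ha : d ^ 2 - ∑ i, (m i) ^ 2 = -1)
    (hb : (d - 1) * (d - 2) / 2 - ∑ i, m i * (m i - 1) / 2 = 0) :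
    ∃ i₁ i₂ i₃ : Fin n, i₁ ≠ i₂ ∧ i₁ ≠ i₃ ∧ i₂ ≠ i₃ ∧
      d < m i₁ + m i₂ + m i₃ := by
  have hsum : ∑ i, m i = 3 * d - 1 := by
    have := two_mul_arithGenus_sub_two d m
    rw [ha, hb] at this
    linarith
  obtain ⟨i₁, i₂, i₃, h12, h13, h23, h21, h32, hrest⟩ :=
    exists_three_largest m (by simpa using hn)
  refine ⟨i₁, i₂, i₃, h12, h13, h23, not_le.1 fun hle ↦ ?_⟩
  have hsq := sum_sq_le_of_le_off_pair h12 hm hrest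
  have hlt := sq_add_sq_add_mul_lt (hm i₃) h32 h21 hle
  rw [hsum] at hsq
  linarith

/-- Noether's lemma for numerical (-1)-classes. -/
theorem noether_lemma_neg_one (n : ℕ) (hn : 3 ≤ n) (d : ℤ) (m : Fin n → ℤ)
    (hd : 0 < d) (hm : ∀ i, 0 ≤ m i)
    (ha : d ^ 2 - ∑ i, (m i) ^ 2 = -1)
    (hb : (d - 1) * (d - 2) / 2 - ∑ i, m i * (m i - 1) / 2 = 0) :
    ∃ i₁ i₂ i₃ : Fin n, i₁ ≠ i₂ ∧ i₁ ≠ i₃ ∧ i₂ ≠ i₃ ∧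
      d < m i₁ + m i₂ + m i₃ :=
  noether_lemma_neg_one_general n hn d m hm ha hb
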